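/- arXiv:2507.08471 — 3 statements merged into one kernel-verified Lean document; each statement's English description precedes it below -/
import Mathlib

section
/- Let U ⊆ ℂ be a bounded open set and z ∈ U a point. Define Shape(U, z) = (sup over x ∈ ∂U of |x − z|) / (inf over x ∈ ∂U of |x − z|). Then Shape(U, z) = 1 if and only if U is an open Euclidean disk centered at z. -/
/-! If every frontier point of `U` lies at distance `r` from `z ∈ U`, then `U = ball z r`: the
ball is connected and misses the frontier, so it lies in `U`; and a point of `U` at distance
`d ≥ r` from `z` is impossible, since the ray from `z` through it leaves the bounded set `U` and so
crosses the frontier strictly beyond it, at distance `> d`. The equality `Shape U z = 1` says that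
all these distances agree: the junk values of `sSup`, `sInf` (empty or unbounded sets) and of
division by `0` would make the ratio `0`. -/

open Metric Set

/-- The shape of a set `U` about a point `z`:  the ratio of the sup and inf of
distances from `z` to the boundary of `U`. -/
noncomputable def Shape (U : Set ℂ) (z : ℂ) : ℝ :=
  sSup ((fun x => dist x z) '' frontier U) / sInf ((fun x => dist x z) '' frontier U)

theorem IsPreconnected.subset_of_disjoint_frontier {X : Type*} [TopologicalSpace X]
    {s U : Set X} (hs : IsPreconnected s) (hU : IsOpen U) (hsU : (s ∩ U).Nonempty)
    (hd : Disjoint s (frontier U)) : s ⊆ U :=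
  hs.subset_of_closure_inter_subset hU hsU fun _ ⟨hpU, hps⟩ =>
    ((closure_eq_self_union_frontier U ▸ hpU).resolve_right (hd.notMem_of_mem_left hps))

theorem exists_mem_frontier_dist_gt {E : Type*} [NormedAddCommGroup E] [NormedSpace ℝ E]
    {U : Set E} (hU : IsOpen U) (hUb : Bornology.IsBounded U) {x z : E} (hx : x ∈ U)
    (hxz : x ≠ z) : ∃ p ∈ frontier U, dist x z < dist p z := by
  set ray := AffineMap.lineMap z x '' Ici (1 : ℝ)
  have hray : IsPreconnected ray :=
    isPreconnected_Ici.image _ AffineMap.lineMap_continuous.continuousOn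
  have hd : 0 < dist x z := dist_pos.2 hxz
  have hdist : ∀ t : ℝ, 0 ≤ t → dist (AffineMap.lineMap z x t) z = t * dist x z := by
    intro t ht
    rw [dist_lineMap_left, Real.norm_of_nonneg ht, dist_comm]
  have hray_not_subset : ¬ ray ⊆ U := by
    intro h
    obtain ⟨R, hR⟩ := hUb.subset_closedBall z
    have hxR : dist x z ≤ R := hR hx
    have ht : 1 ≤ (R + 1) / dist x z := (le_div_iff₀ hd).2 (by linarith)
    have hfar := hR (h ⟨_, ht, rfl⟩)
    rw [mem_closedBall, hdist _ (by linarith), div_mul_cancel₀ _ hd.ne'] at hfar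
    linarith
  have hx_ray : x ∈ ray := ⟨1, self_mem_Ici, AffineMap.lineMap_apply_one _ _⟩
  obtain ⟨_, ⟨t, ht, rfl⟩, hp⟩ := not_disjoint_iff.1
    (mt (hray.subset_of_disjoint_frontier hU ⟨x, hx_ray, hx⟩) hray_not_subset)
  have ht_ne : t ≠ 1 := by
    rintro rfl
    rw [AffineMap.lineMap_apply_one] at hp
    exact (hU.inter_frontier_eq.subset ⟨hx, hp⟩).elim
  refine ⟨_, hp, ?_⟩
  rw [hdist t (zero_le_one.trans ht)]
  exact lt_mul_of_one_lt_left hd (ht.lt_of_ne' ht_ne)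

theorem eq_ball_of_frontier_subset_sphere {E : Type*} [NormedAddCommGroup E] [NormedSpace ℝ E]
    {U : Set E} (hU : IsOpen U) (hUb : Bornology.IsBounded U) {z : E} (hz : z ∈ U) {r : ℝ}
    (hr : 0 < r) (h : frontier U ⊆ sphere z r) : U = ball z r := by
  have hball : ball z r ⊆ U :=
    (convex_ball z r).isPreconnected.subset_of_disjoint_frontier hU ⟨z, mem_ball_self hr, hz⟩
      (sphere_disjoint_ball.symm.mono_right h)
  refine subset_antisymm (fun x hx => ?_) hball
  rcases eq_or_ne x z with rfl | hxz
  · exact mem_ball_self hr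
  obtain ⟨p, hp, hlt⟩ := exists_mem_frontier_dist_gt hU hUb hx hxz
  exact hlt.trans_eq (h hp)

theorem Real.forall_mem_eq_sInf_of_sSup_div_sInf_eq_one {S : Set ℝ} (hS : ∀ a ∈ S, 0 ≤ a)
    (h : sSup S / sInf S = 1) : 0 < sInf S ∧ ∀ a ∈ S, a = sInf S := by
  have hinf : sInf S ≠ 0 := by
    rintro h0
    simp [h0] at h
  have hsup : sSup S = sInf S := (div_eq_one_iff_eq hinf).1 h
  have hbdd : BddAbove S := by
    by_contra hb
    exact hinf (hsup ▸ Real.sSup_of_not_bddAbove hb)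
  refine ⟨(Real.sInf_nonneg hS).lt_of_ne' hinf, fun a ha => ?_⟩
  exact le_antisymm (hsup ▸ le_csSup hbdd ha) (csInf_le ⟨0, hS⟩ ha)

theorem frontier_subset_sphere_of_shape_eq_one {U : Set ℂ} {z : ℂ} (h : Shape U z = 1) :
    ∃ r > 0, frontier U ⊆ sphere z r := by
  obtain ⟨hpos, heq⟩ := Real.forall_mem_eq_sInf_of_sSup_div_sInf_eq_one
    (by rintro _ ⟨x, -, rfl⟩; exact dist_nonneg) h
  exact ⟨_, hpos, fun x hx => heq _ ⟨x, hx, rfl⟩⟩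

theorem shape_ball (z : ℂ) {r : ℝ} (hr : 0 < r) : Shape (ball z r) z = 1 := by
  have himage : (fun x => dist x z) '' frontier (ball z r) = {r} := by
    rw [frontier_ball z hr.ne', image_congr fun x hx => mem_sphere.1 hx,
      (NormedSpace.sphere_nonempty.2 hr.le).image_const]
  rw [Shape, himage, csSup_singleton, csInf_singleton, div_self hr.ne']

theorem shape_eq_one_iff_ball_general (U : Set ℂ) (z : ℂ)
    (hUopen : IsOpen U) (hUbdd : Bornology.IsBounded U)
    (hz : z ∈ U) :
    Shape U z = 1 ↔ ∃ r > 0, U = Metric.ball z r := by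
  constructor
  · intro h
    obtain ⟨r, hr, hfrontier⟩ := frontier_subset_sphere_of_shape_eq_one h
    exact ⟨r, hr, eq_ball_of_frontier_subset_sphere hUopen hUbdd hz hr hfrontier⟩
  · rintro ⟨r, hr, rfl⟩
    exact shape_ball z hr

theorem shape_eq_one_iff_ball (U : Set ℂ) (z : ℂ)
    (hUopen : IsOpen U) (hUbdd : Bornology.IsBounded U) (hUne : U.Nonempty)
    (hz : z ∈ U) :
    Shape U z = 1 ↔ ∃ r > 0, U = Metric.ball z r :=
  shape_eq_one_iff_ball_general U z hUopen hUbdd hz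
end

section
/- Let K ⊆ ℂ be a compact set contained in an open annulus H, and for ε > 0 let E_ε be the closed ε-neighborhood of K (union of closed disks of radius ε/2 centered at points of K). Then K = ⋂_{ε>0} E_ε, and if K does not separate the two boundary components of H, then for some ε₀ > 0 the set E_{ε₀} does not separate them either. -/
/-!
A connected set joining the two boundary circles inside the closed annulus minus `K` lies in one
component of the open set `ℂ \ ({0} ∪ K)`; that component is path connected, so a path in it
joins the circles. Radial projection onto the closed annulus sends `ℂ \ ({0} ∪ K)` into the
closed annulus minus `K` (points off the closed annulus land on the boundary circles, which `K`
avoids), so the projected path is a compact connected set doing the same job. Being compact and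
disjoint from `K`, it misses some closed thickening of `K`.
-/

open Set Metric

/-- `S` separates the two boundary circles of the annulus `H` if no connected
subset of `closure H \ S` meets both circles. -/
def SeparatesInAnnulus (H γ₀ γ₁ S : Set ℂ) : Prop :=
  ¬ ∃ T : Set ℂ, IsConnected T ∧ T ⊆ closure H \ S ∧
      (T ∩ γ₀).Nonempty ∧ (T ∩ γ₁).Nonempty

theorem IsOpen.joinedIn_of_isPreconnected {X : Type*} [TopologicalSpace X]
    [LocallyPathConnectedSpace X] {U T : Set X} (hU : IsOpen U) (hT : IsPreconnected T)
    (hTU : T ⊆ U) {a b : X} (ha : a ∈ T) (hb : b ∈ T) : JoinedIn U a b := by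
  have hTC : T ⊆ connectedComponentIn U a := hT.subset_connectedComponentIn ha hTU
  have hC : IsPathConnected (connectedComponentIn U a) :=
    hU.connectedComponentIn.isConnected_iff_isPathConnected.mp
      (isConnected_connectedComponentIn_iff.mpr (hTU ha))
  exact (hC.joinedIn a (hTC ha) b (hTC hb)).mono (connectedComponentIn_subset U a)

theorem IsCompact.eq_iInter_biUnion_closedBall_half {α : Type*} [MetricSpace α] {K : Set α}
    (hK : IsCompact K) :
    K = ⋂ ε ∈ {ε : ℝ | 0 < ε}, ⋃ x ∈ K, closedBall x (ε / 2) := by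
  refine Subset.antisymm (fun z hz => mem_iInter₂.mpr fun ε hε =>
    mem_biUnion hz (mem_closedBall_self (half_pos hε).le)) fun z hz => ?_
  rw [← hK.isClosed.closure_eq, closure_eq_iInter_cthickening, mem_iInter₂]
  intro δ hδ
  have hz2δ := mem_iInter₂.mp hz (2 * δ) (by simpa using hδ)
  rwa [mul_div_cancel_left₀ δ two_ne_zero, ← hK.cthickening_eq_biUnion_closedBall hδ.le] at hz2δ

section Annulus

variable {E : Type*} [NormedAddCommGroup E] [NormedSpace ℝ E] {r₀ r₁ : ℝ}

theorem closure_annulus (h0 : 0 < r₀) (h01 : r₀ < r₁) :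
    closure {z : E | r₀ < ‖z‖ ∧ ‖z‖ < r₁} = {z : E | r₀ ≤ ‖z‖ ∧ ‖z‖ ≤ r₁} := by
  refine Subset.antisymm (closure_minimal (fun z hz => ⟨hz.1.le, hz.2.le⟩)
    (isClosed_le continuous_const continuous_norm |>.inter
      (isClosed_le continuous_norm continuous_const))) ?_
  rintro z ⟨hz₀, hz₁⟩
  have hz : 0 < ‖z‖ := h0.trans_le hz₀
  have hray : (· • z) '' Ioo (r₀ / ‖z‖) (r₁ / ‖z‖) ⊆ {z : E | r₀ < ‖z‖ ∧ ‖z‖ < r₁} := by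
    rintro _ ⟨t, ⟨ht₀, ht₁⟩, rfl⟩
    have ht : 0 < t := (div_pos h0 hz).trans ht₀
    rw [div_lt_iff₀ hz] at ht₀
    rw [lt_div_iff₀ hz] at ht₁
    simp only [mem_ofPred_eq, norm_smul, Real.norm_of_nonneg ht.le]
    exact ⟨ht₀, ht₁⟩
  have h1 : (1 : ℝ) ∈ closure (Ioo (r₀ / ‖z‖) (r₁ / ‖z‖)) := by
    rw [closure_Ioo (div_lt_div_of_pos_right h01 hz).ne]
    exact ⟨(div_le_one hz).mpr hz₀, (one_le_div hz).mpr hz₁⟩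
  simpa using closure_mono hray
    (image_closure_subset_closure_image (continuous_id.smul continuous_const) ⟨1, h1, rfl⟩)

variable (r₀ r₁) in
noncomputable def radialClamp (z : E) : E := (max r₀ (min ‖z‖ r₁) / ‖z‖) • z

theorem continuousOn_radialClamp : ContinuousOn (radialClamp r₀ r₁) ({0}ᶜ : Set E) :=
  ((continuous_const.max (continuous_norm.min continuous_const)).continuousOn.div
    continuous_norm.continuousOn fun _ hz => norm_ne_zero_iff.mpr hz).smul continuousOn_id

theorem norm_radialClamp (h0 : 0 ≤ r₀) {z : E} (hz : z ≠ 0) :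
    ‖radialClamp r₀ r₁ z‖ = max r₀ (min ‖z‖ r₁) := by
  have hpos : 0 < ‖z‖ := norm_pos_iff.mpr hz
  rw [radialClamp, norm_smul, Real.norm_of_nonneg
    (div_nonneg (h0.trans (le_max_left _ _)) hpos.le), div_mul_cancel₀ _ hpos.ne']

theorem radialClamp_eq_self {z : E} (h₀ : r₀ ≤ ‖z‖) (h₁ : ‖z‖ ≤ r₁) :
    radialClamp r₀ r₁ z = z := by
  rcases eq_or_ne z 0 with rfl | hz
  · simp [radialClamp]
  · rw [radialClamp, min_eq_left h₁, max_eq_right h₀, div_self (norm_ne_zero_iff.mpr hz),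
      one_smul]

theorem mapsTo_radialClamp (h0 : 0 < r₀) (h01 : r₀ < r₁) {K : Set E}
    (hK : K ⊆ {z : E | r₀ < ‖z‖ ∧ ‖z‖ < r₁}) :
    MapsTo (radialClamp r₀ r₁) ({0}ᶜ \ K) (closure {z : E | r₀ < ‖z‖ ∧ ‖z‖ < r₁} \ K) := by
  rintro z ⟨hz, hzK⟩
  have hnorm := norm_radialClamp (r₁ := r₁) h0.le hz
  refine ⟨?_, fun hρK => hzK ?_⟩
  · rw [closure_annulus h0 h01, mem_ofPred_eq, hnorm]
    exact ⟨le_max_left _ _, max_le h01.le (min_le_right _ _)⟩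
  · have hρ := hK hρK
    simp only [mem_ofPred_eq, hnorm, lt_max_iff, max_lt_iff, lt_min_iff, min_lt_iff,
      lt_self_iff_false, or_false, false_or] at hρ
    rwa [← radialClamp_eq_self (r₀ := r₀) (r₁ := r₁) hρ.1.1.le (by linarith [hρ.2.2])]

end Annulus

theorem exists_isCompact_isConnected_of_not_separatesInAnnulus {r₀ r₁ : ℝ} (h0 : 0 < r₀)
    (h01 : r₀ < r₁) {K : Set ℂ} (hKc : IsClosed K) (hK : K ⊆ {z : ℂ | r₀ < ‖z‖ ∧ ‖z‖ < r₁})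
    (h : ¬ SeparatesInAnnulus {z : ℂ | r₀ < ‖z‖ ∧ ‖z‖ < r₁}
      (sphere 0 r₀) (sphere 0 r₁) K) :
    ∃ T : Set ℂ, IsCompact T ∧ IsConnected T ∧
      T ⊆ closure {z : ℂ | r₀ < ‖z‖ ∧ ‖z‖ < r₁} \ K ∧
      (T ∩ sphere 0 r₀).Nonempty ∧ (T ∩ sphere 0 r₁).Nonempty := by
  obtain ⟨T, hT, hTH, ⟨a, haT, ha⟩, ⟨b, hbT, hb⟩⟩ := not_not.mp h
  have hTΩ : T ⊆ {0}ᶜ \ K := fun z hz => by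
    refine ⟨fun hz0 => ?_, (hTH hz).2⟩
    have hz₀ := ((closure_annulus h0 h01).le (hTH hz).1).1
    rw [mem_singleton_iff.mp hz0, norm_zero] at hz₀
    exact h0.not_ge hz₀
  obtain ⟨γ, hγ⟩ := (isOpen_compl_singleton.sdiff hKc).joinedIn_of_isPreconnected
    hT.isPreconnected hTΩ haT hbT
  have hρa : radialClamp r₀ r₁ a = a :=
    radialClamp_eq_self (mem_sphere_zero_iff_norm.mp ha).ge (by simp_all [h01.le])
  have hρb : radialClamp r₀ r₁ b = b :=
    radialClamp_eq_self (by simp_all [h01.le]) (mem_sphere_zero_iff_norm.mp hb).le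
  have hγΩ : range γ ⊆ {0}ᶜ \ K := range_subset_iff.mpr hγ
  have hcont : ContinuousOn (radialClamp r₀ r₁) (range γ) :=
    continuousOn_radialClamp.mono fun z hz => (hγΩ hz).1
  refine ⟨radialClamp r₀ r₁ '' range γ,
    (isCompact_range γ.continuous).image_of_continuousOn hcont,
    (isConnected_range γ.continuous).image _ hcont,
    ((mapsTo_radialClamp h0 h01 hK).mono_left hγΩ).image_subset,
    ⟨a, ⟨a, ⟨0, γ.source⟩, hρa⟩, ha⟩, ⟨b, ⟨b, ⟨1, γ.target⟩, hρb⟩, hb⟩⟩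

theorem exists_cthickening_not_separatesInAnnulus {H γ₀ γ₁ K T : Set ℂ} (hK : IsCompact K)
    (hT : IsCompact T) (hTconn : IsConnected T) (hTH : T ⊆ closure H \ K)
    (h₀ : (T ∩ γ₀).Nonempty) (h₁ : (T ∩ γ₁).Nonempty) :
    ∃ δ > 0, ¬ SeparatesInAnnulus H γ₀ γ₁ (cthickening δ K) := by
  obtain ⟨δ, hδ, hKT⟩ := hK.exists_cthickening_subset_open hT.isClosed.isOpen_compl
    fun x hxK hxT => (hTH hxT).2 hxK
  exact ⟨δ, hδ, fun hsep => hsep ⟨T, hTconn,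
    fun z hz => ⟨(hTH hz).1, fun hzK => hKT hzK hz⟩, h₀, h₁⟩⟩

/-- A compact subset of an annulus is the intersection of its closed
`ε`-neighborhoods, and if it does not separate the two boundary circles then
neither does some closed `ε₀`-neighborhood. -/
theorem neighborhood_separation (r₀ r₁ : ℝ) (h0 : 0 < r₀) (h01 : r₀ < r₁)
    (K : Set ℂ) (hKcpt : IsCompact K)
    (hK : K ⊆ {z : ℂ | r₀ < ‖z‖ ∧ ‖z‖ < r₁}) :
    K = ⋂ ε ∈ {ε : ℝ | 0 < ε}, (⋃ x ∈ K, Metric.closedBall x (ε / 2)) ∧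
    (¬ SeparatesInAnnulus {z : ℂ | r₀ < ‖z‖ ∧ ‖z‖ < r₁}
        (Metric.sphere (0 : ℂ) r₀) (Metric.sphere (0 : ℂ) r₁) K →
      ∃ ε₀ > (0 : ℝ),
        ¬ SeparatesInAnnulus {z : ℂ | r₀ < ‖z‖ ∧ ‖z‖ < r₁}
          (Metric.sphere (0 : ℂ) r₀) (Metric.sphere (0 : ℂ) r₁)
          (⋃ x ∈ K, Metric.closedBall x (ε₀ / 2))) := by
  refine ⟨hKcpt.eq_iInter_biUnion_closedBall_half, fun hns => ?_⟩
  obtain ⟨T, hT, hTconn, hTH, h₀, h₁⟩ :=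
    exists_isCompact_isConnected_of_not_separatesInAnnulus h0 h01 hKcpt.isClosed hK hns
  obtain ⟨δ, hδ, hsep⟩ :=
    exists_cthickening_not_separatesInAnnulus hKcpt hT hTconn hTH h₀ h₁
  refine ⟨2 * δ, by positivity, ?_⟩
  rwa [mul_div_cancel_left₀ δ two_ne_zero, ← hKcpt.cthickening_eq_biUnion_closedBall hδ.le]
end

section
/- Let f : ℂ → ℂ be a polynomial and (Ωᵢ) a sequence of distinct connected components of the Fatou set of f whose closures converge in the Hausdorff metric to a compact set K. Then K is contained in the Julia set J_f. -/
/-!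
Near infinity a polynomial of degree at least two at least doubles the norm, so the exterior
`{z | R < ‖z‖}` of a large disc escapes to infinity; being open, it misses the closure of the
filled Julia set and hence the Julia set. This exterior is connected, so all unbounded Fatou
components coincide, and distinct components are eventually bounded. If a point `x ∈ K` had a
ball `B(x, r)` in the Fatou set, then every bounded component whose closure is `r`-close to `K`
in the Hausdorff metric would meet `B(x, r)` and hence be the component of `x`; two distinct
members of the sequence would then be equal.
-/

open Set Filter Metric Bornology Polynomial Topology

def filledJuliaSet {α : Type*} [Bornology α] (f : α → α) : Set α :=
  {z | IsBounded (range fun n => f^[n] z)}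

theorem connectedComponentIn_eq_of_isPreconnected {X : Type*} [TopologicalSpace X] {S U : Set X}
    (hS : IsPreconnected S) (hSU : S ⊆ U) {x y z : X} (hxz : x ∈ connectedComponentIn U z)
    (hxS : x ∈ S) (hyS : y ∈ S) : connectedComponentIn U z = connectedComponentIn U y :=
  (connectedComponentIn_eq hxz).trans
    (connectedComponentIn_eq (hS.subset_connectedComponentIn hxS hSU hyS))

section Escape

variable {E : Type*} [SeminormedAddCommGroup E] {f : E → E} {c : ℝ}

theorem pow_mul_norm_le_norm_iterate {R : ℝ} (hc : 1 ≤ c)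
    (hf : ∀ z, R ≤ ‖z‖ → c * ‖z‖ ≤ ‖f z‖) {z : E} (hz : R ≤ ‖z‖) (n : ℕ) :
    c ^ n * ‖z‖ ≤ ‖f^[n] z‖ := by
  induction n with
  | zero => simp
  | succ n ih =>
    have hR : R ≤ ‖f^[n] z‖ :=
      hz.trans ((le_mul_of_one_le_left (norm_nonneg z) (one_le_pow₀ hc)).trans ih)
    rw [Function.iterate_succ_apply', pow_succ', mul_assoc]
    exact (mul_le_mul_of_nonneg_left ih (by linarith)).trans (hf _ hR)

theorem eventually_cobounded_notMem_filledJuliaSet (hc : 1 < c)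
    (hf : ∀ᶠ z in cobounded E, c * ‖z‖ ≤ ‖f z‖) :
    ∀ᶠ z in cobounded E, z ∉ filledJuliaSet f := by
  obtain ⟨R, -, hR⟩ := hasBasis_cobounded_norm.eventually_iff.1 hf
  filter_upwards [tendsto_norm_cobounded_atTop.eventually_ge_atTop (max R 1)] with z hz hbdd
  obtain ⟨C, hC⟩ := isBounded_iff_forall_norm_le.1 hbdd
  have hz0 : 0 < ‖z‖ := one_pos.trans_le ((le_max_right R 1).trans hz)
  obtain ⟨n, hn⟩ := ((tendsto_pow_atTop_atTop_of_one_lt hc).eventually_gt_atTop (C / ‖z‖)).exists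
  have hgrowth := pow_mul_norm_le_norm_iterate hc.le (fun w hw => hR hw)
    ((le_max_left R 1).trans hz) n
  have hbound := hC _ (mem_range_self n)
  rw [div_lt_iff₀ hz0] at hn
  linarith

end Escape

theorem Polynomial.eventually_cobounded_mul_norm_le_norm_eval {𝕜 : Type*} [NormedField 𝕜]
    (p : 𝕜[X]) (hp : 2 ≤ p.natDegree) (c : ℝ) :
    ∀ᶠ z in cobounded 𝕜, c * ‖z‖ ≤ ‖p.eval z‖ := by
  have hdivX : 0 < p.divX.degree := by
    rw [← natDegree_pos_iff_degree_pos, natDegree_divX_eq_natDegree_tsub_one]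
    omega
  filter_upwards [(p.divX.tendsto_norm_atTop hdivX tendsto_norm_cobounded_atTop).eventually_ge_atTop
      (c + 1), tendsto_norm_cobounded_atTop.eventually_ge_atTop ‖p.coeff 0‖] with z hq h0
  have heval : p.eval z = p.divX.eval z * z + p.coeff 0 := by
    conv_lhs => rw [← divX_mul_X_add p]
    simp
  calc c * ‖z‖ = (c + 1) * ‖z‖ - ‖z‖ := by ring
    _ ≤ ‖p.divX.eval z‖ * ‖z‖ - ‖p.coeff 0‖ := by gcongr
    _ = ‖p.divX.eval z * z‖ - ‖-p.coeff 0‖ := by rw [norm_mul, norm_neg]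
    _ ≤ ‖p.divX.eval z * z - -p.coeff 0‖ := norm_sub_norm_le _ _
    _ = ‖p.eval z‖ := by rw [heval, sub_neg_eq_add]

section NormedSpace

variable {E : Type*} [NormedAddCommGroup E] [NormedSpace ℝ E]

theorem isPreconnected_setOf_lt_norm (hE : 1 < Module.rank ℝ E) (R : ℝ) :
    IsPreconnected {z : E | R < ‖z‖} := by
  have hsphere := isConnected_sphere hE (0 : E) zero_le_one
  have himage : {z : E | R < ‖z‖} = (fun q : ℝ × E => q.1 • q.2) '' (Ioi R ×ˢ sphere 0 1) := by
    ext z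
    constructor
    · intro hz
      by_cases hz0 : ‖z‖ = 0
      · obtain ⟨u, hu⟩ := hsphere.nonempty
        refine ⟨(0, u), ⟨by simpa [hz0] using hz, hu⟩, ?_⟩
        simpa using (norm_eq_zero.1 hz0).symm
      · refine ⟨(‖z‖, ‖z‖⁻¹ • z), ⟨hz, ?_⟩, ?_⟩
        · simp [norm_smul, hz0]
        · simp [smul_smul, hz0]
    · rintro ⟨⟨t, u⟩, ⟨ht, hu⟩, rfl⟩
      have hu1 : ‖u‖ = 1 := by simpa using hu
      simpa [norm_smul, hu1] using (mem_Ioi.1 ht).trans_le (le_abs_self t)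
  rw [himage]
  exact (isPreconnected_Ioi.prod hsphere.isPreconnected).image _ continuous_smul.continuousOn

theorem connectedComponentIn_eq_of_not_isBounded (hE : 1 < Module.rank ℝ E) {U : Set E} {R : ℝ}
    (hV : {z : E | R < ‖z‖} ⊆ U) {z w : E} (hC : ¬IsBounded (connectedComponentIn U z))
    (hw : R < ‖w‖) : connectedComponentIn U z = connectedComponentIn U w := by
  obtain ⟨v, hvC, hv⟩ : ∃ v ∈ connectedComponentIn U z, R < ‖v‖ := by
    by_contra! h
    exact hC (isBounded_iff_forall_norm_le.2 ⟨R, h⟩)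
  exact connectedComponentIn_eq_of_isPreconnected (isPreconnected_setOf_lt_norm hE R) hV hvC hv hw

theorem connectedComponentIn_eq_of_hausdorffDist_lt {U K : Set E} {x z : E} {r : ℝ}
    (hball : ball x r ⊆ U) (hxK : x ∈ K) (hK : IsBounded K) (hz : z ∈ U)
    (hC : IsBounded (connectedComponentIn U z))
    (hdist : hausdorffDist (closure (connectedComponentIn U z)) K < r) :
    connectedComponentIn U z = connectedComponentIn U x := by
  have hfin : hausdorffEDist (closure (connectedComponentIn U z)) K ≠ ⊤ :=
    hausdorffEDist_ne_top_of_nonempty_of_bounded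
      ⟨z, subset_closure (mem_connectedComponentIn hz)⟩ ⟨x, hxK⟩ hC.closure hK
  obtain ⟨y, hy, hxy⟩ := exists_dist_lt_of_hausdorffDist_lt' hxK hdist hfin
  obtain ⟨w, hwx, hwC⟩ := _root_.mem_closure_iff.1 hy (ball x r) isOpen_ball (mem_ball.2 hxy)
  have hr : 0 < r := hausdorffDist_nonneg.trans_lt hdist
  exact connectedComponentIn_eq_of_isPreconnected isPreconnected_ball hball hwC hwx
    (mem_ball_self hr)

theorem subset_compl_of_tendsto_hausdorffDist_closure_connectedComponentIn {U K : Set E}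
    (hU : IsOpen U) {Ω : ℕ → Set E} (hΩ : ∀ i, ∃ z ∈ U, Ω i = connectedComponentIn U z)
    (hinj : Function.Injective Ω) (hbdd : ∀ᶠ i in atTop, IsBounded (Ω i)) (hK : IsBounded K)
    (hconv : Tendsto (fun i => hausdorffDist (closure (Ω i)) K) atTop (𝓝 0)) : K ⊆ Uᶜ := by
  intro x hxK hxU
  obtain ⟨r, hr, hball⟩ := Metric.isOpen_iff.1 hU x hxU
  have hlim : ∀ᶠ i in atTop, Ω i = connectedComponentIn U x := by
    filter_upwards [hconv.eventually_lt_const hr, hbdd] with i hdist hb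
    obtain ⟨z, hz, hΩi⟩ := hΩ i
    rw [hΩi] at hdist hb ⊢
    exact connectedComponentIn_eq_of_hausdorffDist_lt hball hxK hK hz hb hdist
  obtain ⟨N, hN⟩ := hlim.exists_forall_of_atTop
  exact N.succ_ne_self (hinj ((hN _ N.le_succ).trans (hN N le_rfl).symm))

end NormedSpace

/-- The Hausdorff limit of the closures of a sequence of distinct Fatou
components of a polynomial is contained in the Julia set.  For a polynomial,
the Julia set is the boundary of the filled Julia set, and the Fatou set is its
complement. -/
theorem hausdorff_limit_of_fatou_components_in_julia (p : Polynomial ℂ)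
    (hd : 2 ≤ p.natDegree)
    (J : Set ℂ)
    (hJ : J = frontier {z : ℂ | Bornology.IsBounded (Set.range fun n => (fun w => p.eval w)^[n] z)})
    (Ω : ℕ → Set ℂ)
    (hΩ : ∀ i, ∃ z ∈ Jᶜ, Ω i = connectedComponentIn Jᶜ z)
    (hdistinct : ∀ i j, i ≠ j → Ω i ≠ Ω j)
    (K : Set ℂ) (hKcpt : IsCompact K)
    (hconv : Tendsto (fun i => Metric.hausdorffDist (closure (Ω i)) K) atTop (nhds 0)) :
    K ⊆ J := by
  have hrank : 1 < Module.rank ℝ ℂ := by rw [Complex.rank_real_complex]; norm_num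
  obtain ⟨R, -, hR⟩ := hasBasis_cobounded_norm.eventually_iff.1
    (eventually_cobounded_notMem_filledJuliaSet one_lt_two
      (p.eventually_cobounded_mul_norm_le_norm_eval hd 2))
  have hV : {z : ℂ | R < ‖z‖} ⊆ Jᶜ := by
    have hdisj : Disjoint {z : ℂ | R < ‖z‖} (filledJuliaSet fun w => p.eval w) :=
      disjoint_left.2 fun z (hz : R < ‖z‖) => hR (show R ≤ ‖z‖ from hz.le)
    rw [hJ]
    exact ((hdisj.closure_right (isOpen_lt continuous_const continuous_norm)).mono_right
      frontier_subset_closure).subset_compl_right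
  have hinj : Function.Injective Ω := fun i j h => by_contra fun hij => hdistinct i j hij h
  have hbdd : ∀ᶠ i in atTop, IsBounded (Ω i) := by
    obtain ⟨w, hw⟩ := NormedField.exists_lt_norm ℂ R
    rw [← Nat.cofinite_eq_atTop]
    filter_upwards [hinj.tendsto_cofinite.eventually (eventually_cofinite_ne
      (connectedComponentIn Jᶜ w))] with i hi
    obtain ⟨z, -, hΩi⟩ := hΩ i
    rw [hΩi] at hi ⊢
    by_contra hC
    exact hi (connectedComponentIn_eq_of_not_isBounded hrank hV hC hw)
  have hU : IsOpen Jᶜ := hJ ▸ isClosed_frontier.isOpen_compl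
  simpa using subset_compl_of_tendsto_hausdorffDist_closure_connectedComponentIn hU hΩ hinj hbdd
    hKcpt.isBounded hconv
end
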